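/- Let G be a pro-p group, (Q,w) a division ring with a discrete non-archimedean multiplicative valuation w : Q → {p^k : k ∈ Z} ∪ {0}, and φ : F_p[[G]] → Q a continuous injective ring homomorphism (with respect to the topology on Q induced by w). Then w(φ(g)) = 1 for every g ∈ G, and for each i ≥ 0 the set G_i = {g ∈ G : w(φ(g-1)) ≤ p^{-i}} is an open normal subgroup of G, the G_i form a descending chain with trivial intersection, and G_0 = G. -/

import Mathlib

/-! The map `g ↦ w (φ g)` is a positive real character of the compact group `G`, upper
semicontinuous because `φ` is continuous. It attains a maximum `M`, and `M * M = w (φ g₀²) ≤ M`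
forces `M ≤ 1`; applied to `g` and `g⁻¹` this gives `w (φ g) = 1`. So every `φ g` lies on the unit
sphere of the non-archimedean `w`, which makes each ball `{g | w (φ g - 1) ≤ c}` a normal
subgroup; it is open because it contains the open ball `{g | w (φ g - 1) < c}`. The balls shrink
to the kernel of `G → F_p[[G]]`, which is trivial because the finite quotients of a profinite
group separate its points. -/

section CGA

/-- The index set of open normal subgroups of a topological group `G`. -/
def OpenNormals (G : Type) [Group G] [TopologicalSpace G] :=
  {U : Subgroup G // U.Normal ∧ IsOpen (U : Set G)}

instance {G : Type} [Group G] [TopologicalSpace G] (U : OpenNormals G) : U.val.Normal :=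
  U.2.1

variable (p : ℕ) (G : Type) [Group G] [TopologicalSpace G]

/-- The transition ring homomorphism between the group algebras of two finite quotients. -/
noncomputable def cgaTrans {U V : OpenNormals G} (h : U.val ≤ V.val) :
    MonoidAlgebra (ZMod p) (G ⧸ U.val) →+* MonoidAlgebra (ZMod p) (G ⧸ V.val) :=
  MonoidAlgebra.mapDomainRingHom (ZMod p)
    (QuotientGroup.map U.val V.val (MonoidHom.id G) (by simpa using h))

/-- The completed group algebra `F_p[[G]]` of a topological group `G`, realized as the
subring of compatible families in the product of the group algebras of the finite
(continuous) quotients of `G`. -/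
noncomputable def cgaSubring :
    Subring (Π U : OpenNormals G, MonoidAlgebra (ZMod p) (G ⧸ U.val)) where
  carrier := {x | ∀ (U V : OpenNormals G) (h : U.val ≤ V.val), cgaTrans p G h (x U) = x V}
  zero_mem' := by intro U V h; simp
  one_mem' := by intro U V h; simp
  add_mem' := by
    intro a b ha hb U V h
    simp only [Pi.add_apply, map_add, ha U V h, hb U V h]
  mul_mem' := by
    intro a b ha hb U V h
    simp only [Pi.mul_apply, map_mul, ha U V h, hb U V h]
  neg_mem' := by
    intro a ha U V h
    simp only [Pi.neg_apply, map_neg, ha U V h]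

/-- The completed group algebra `F_p[[G]]`. -/
noncomputable abbrev CompletedGroupAlgebra := ↥(cgaSubring p G)

/-- The canonical (continuous) inclusion of the group `G` into the unit group of its
completed group algebra. -/
noncomputable def ofG : G →* CompletedGroupAlgebra p G where
  toFun g := ⟨fun U => MonoidAlgebra.of (ZMod p) (G ⧸ U.val) (QuotientGroup.mk g), by
    intro U V h
    simp [cgaTrans, MonoidAlgebra.of_apply, Finsupp.mapDomain_single]⟩
  map_one' := by
    apply Subtype.ext
    funext U
    simp [MonoidAlgebra.one_def]
  map_mul' := fun g h => by
    apply Subtype.ext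
    funext U
    simp [MulMemClass.coe_mul]

/-- The distinguished open normal subgroup `⊤`. -/
def topON : OpenNormals G :=
  ⟨⊤, inferInstance, by rw [Subgroup.coe_top]; exact isOpen_univ⟩

/-- The augmentation homomorphism `F_p[[G]] → F_p`. -/
noncomputable def cgaAug : CompletedGroupAlgebra p G →+* ZMod p :=
  (((MonoidAlgebra.lift (ZMod p) (ZMod p) (G ⧸ (topON G).val)) 1).toRingHom).comp
    ((Pi.evalRingHom _ (topON G)).comp (cgaSubring p G).subtype)

/-- The chain of powers `I_G ^ k` of the augmentation ideal of `F_p[[G]]`, as additive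
subgroups. -/
noncomputable def powIG : ℕ → AddSubgroup (CompletedGroupAlgebra p G)
  | 0 => ⊤
  | (k + 1) => AddSubgroup.closure
      {y | ∃ a, cgaAug p G a = 0 ∧ ∃ b ∈ powIG k, y = a * b}

end CGA

section ProP

/-- A pro-`p` group: a profinite (compact, Hausdorff, totally disconnected) group all of whose
open normal subgroups have `p`-power index. -/
def IsProPGroup (p : ℕ) (G : Type) [Group G] [TopologicalSpace G] : Prop :=
  CompactSpace G ∧ T2Space G ∧ TotallyDisconnectedSpace G ∧
    ∀ U : Subgroup G, U.Normal → IsOpen (U : Set G) → ∃ k : ℕ, U.index = p ^ k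

/-- A topological group is topologically finitely generated. -/
def TopFG (G : Type) [Group G] [TopologicalSpace G] : Prop :=
  ∃ s : Finset G, closure ((Subgroup.closure (s : Set G) : Subgroup G) : Set G) = Set.univ

/-- `N` is a free pro-`p` group: it is a profinite group admitting a basis `ι : X → N`
converging to `1`, which generates `N` topologically and has the universal lifting property
for maps into finite `p`-groups (with their discrete topology). -/
def IsFreeProP (p : ℕ) (N : Type) [Group N] [TopologicalSpace N] : Prop :=
  CompactSpace N ∧ T2Space N ∧ TotallyDisconnectedSpace N ∧
    ∃ (X : Type) (ι : X → N),
      (∀ U : Set N, IsOpen U → (1 : N) ∈ U → {x : X | ι x ∉ U}.Finite) ∧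
      closure ((Subgroup.closure (Set.range ι) : Subgroup N) : Set N) = Set.univ ∧
      ∀ (P : Type) [Group P] [Finite P], IsPGroup p P →
        ∀ f : X → P, ∃! φ : N →* P,
          (∀ y : P, IsOpen {n : N | φ n = y}) ∧ ∀ x, φ (ι x) = f x

/-- A topological group `G` is free-by-`ℤ_p`: there is a closed normal free pro-`p`
subgroup `N` (realized as the kernel of a continuous surjection onto `ℤ_p`) with
`G / N ≅ ℤ_p`. -/
def IsFreeByZp (p : ℕ) [Fact p.Prime] (G : Type) [Group G] [TopologicalSpace G] : Prop :=
  ∃ (N : Subgroup G) (θ : G →* Multiplicative ℤ_[p]),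
    IsClosed (N : Set G) ∧ IsFreeProP p ↥N ∧ Continuous θ ∧
      Function.Surjective θ ∧ θ.ker = N

end ProP

/-- The finite-level group algebras carry the discrete topology; this induces the natural
profinite topology on the completed group algebra. -/
instance monoidAlgebraDiscreteTop {k H : Type} [Semiring k] : TopologicalSpace (MonoidAlgebra k H) := ⊥

/-- A discrete non-archimedean multiplicative valuation on a division ring `Q`, with value
group contained in `{p^k : k ∈ ℤ} ∪ {0}`. -/
def IsDiscreteValuation (p : ℕ) {Q : Type} [DivisionRing Q] (w : Q → ℝ) : Prop :=
  (∀ q, w q = 0 ↔ q = 0) ∧ w 1 = 1 ∧ (∀ a b, w (a * b) = w a * w b) ∧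
    (∀ a b, w (a + b) ≤ max (w a) (w b)) ∧ (∀ q, q ≠ 0 → ∃ k : ℤ, w q = (p : ℝ) ^ k)


instance {k H : Type} [Semiring k] : DiscreteTopology (MonoidAlgebra k H) := ⟨rfl⟩

section CompletedGroupAlgebra

variable (p : ℕ) (G : Type) [Group G] [TopologicalSpace G] [IsTopologicalGroup G]

theorem continuous_ofG : Continuous (ofG p G) := by
  refine Continuous.subtype_mk (continuous_pi fun U => ?_) _
  have := QuotientGroup.discreteTopology U.2.2
  exact (continuous_of_discreteTopology (f := fun c : G ⧸ U.val =>
    MonoidAlgebra.of (ZMod p) _ c)).comp QuotientGroup.continuous_mk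

theorem ofG_injective [Nontrivial (ZMod p)] [CompactSpace G] [T1Space G]
    [TotallyDisconnectedSpace G] : Function.Injective (ofG p G) := by
  refine (injective_iff_map_eq_one _).2 fun g hg => ?_
  by_contra hne
  obtain ⟨H, hH⟩ := ProfiniteGrp.exist_openNormalSubgroup_sub_open_nhds_of_one
    isOpen_compl_singleton (Ne.symm hne)
  have hH' : MonoidAlgebra.of (ZMod p) (G ⧸ H.toSubgroup) g = MonoidAlgebra.of _ _ 1 :=
    congrArg (fun x => x.val ⟨H.toSubgroup, H.isNormal', H.isOpen'⟩) hg
  have hgH : (g : G ⧸ H.toSubgroup) = 1 := (MonoidAlgebra.single_left_inj one_ne_zero).1 hH'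
  exact hH ((QuotientGroup.eq_one_iff g).1 hgH) rfl

end CompletedGroupAlgebra

namespace IsDiscreteValuation

variable {p : ℕ} {Q : Type} [DivisionRing Q] {w : Q → ℝ}

theorem nonneg (hw : IsDiscreteValuation p w) (q : Q) : 0 ≤ w q := by
  by_cases hq : q = 0
  · rw [(hw.1 q).2 hq]
  · obtain ⟨k, hk⟩ := hw.2.2.2.2 q hq
    rw [hk]
    positivity

def toAbsoluteValue (hw : IsDiscreteValuation p w) : AbsoluteValue Q ℝ where
  toFun := w
  map_mul' := hw.2.2.1
  nonneg' := hw.nonneg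
  eq_zero' := hw.1
  add_le' a b := (hw.2.2.2.1 a b).trans (max_le_add_of_nonneg (hw.nonneg a) (hw.nonneg b))

end IsDiscreteValuation

theorem MonoidHom.eq_one_of_upperSemicontinuous {G : Type} [Group G] [TopologicalSpace G]
    [CompactSpace G] (χ : G →* ℝ) (hχ₀ : ∀ g, 0 ≤ χ g) (hχ : UpperSemicontinuous χ) (g : G) :
    χ g = 1 := by
  have hinv : ∀ g, χ g * χ g⁻¹ = 1 := fun g => by rw [← map_mul, mul_inv_cancel, map_one]
  have hpos : ∀ g, 0 < χ g := fun g =>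
    (hχ₀ g).lt_of_ne fun h => by simpa [← h] using hinv g
  obtain ⟨g₀, -, hmax⟩ :=
    (hχ.upperSemicontinuousOn _).exists_isMaxOn Set.univ_nonempty isCompact_univ
  have hmax_le : χ g₀ ≤ 1 := by
    refine le_of_mul_le_mul_left ?_ (hpos g₀)
    rw [mul_one, ← map_mul]
    exact hmax (Set.mem_univ _)
  have hle : ∀ g, χ g ≤ 1 := fun g => (hmax (Set.mem_univ g)).trans hmax_le
  nlinarith [hle g, hle g⁻¹, hinv g, hpos g, hpos g⁻¹]

theorem eq_zero_of_forall_le_zpow_neg {a b : ℝ} (ha : 0 ≤ a) (hb : 1 < b)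
    (h : ∀ n : ℕ, a ≤ b ^ (-(n : ℤ))) : a = 0 := by
  refine ha.antisymm' (le_of_forall_pos_lt_add fun ε hε => ?_)
  obtain ⟨n, hn⟩ := exists_pow_lt_of_lt_one hε (inv_lt_one_of_one_lt₀ hb)
  calc a ≤ b ^ (-(n : ℤ)) := h n
    _ = b⁻¹ ^ n := by rw [zpow_neg, zpow_natCast, inv_pow]
    _ < 0 + ε := by rwa [zero_add]

namespace AbsoluteValue

variable {G R : Type} [Group G] [Ring R] (v : AbsoluteValue R ℝ)

theorem upperSemicontinuous_of_isOpen_lt [TopologicalSpace R]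
    (hv : ∀ r : ℝ, 0 < r → IsOpen {x : R | v x < r}) : UpperSemicontinuous v := by
  refine upperSemicontinuous_iff_isOpen_preimage.2 fun r => ?_
  rcases lt_or_ge 0 r with hr | hr
  · exact hv r hr
  · convert isOpen_empty
    exact Set.eq_empty_of_forall_notMem fun x hx => (hx.trans_le hr).not_ge (v.nonneg x)

theorem apply_eq_one_of_compactSpace [Nontrivial R] [TopologicalSpace G] [CompactSpace G]
    [TopologicalSpace R] (ψ : G →* R) (hψ : Continuous ψ) (hv : UpperSemicontinuous v) (g : G) :
    v (ψ g) = 1 :=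
  (v.toMonoidHom.comp ψ).eq_one_of_upperSemicontinuous (fun _ => v.nonneg _)
    (hv.comp hψ) g

theorem apply_sub_one_le_one [Nontrivial R] (hna : IsNonarchimedean v) {x : R} (hx : v x = 1) :
    v (x - 1) ≤ 1 := by
  rw [sub_eq_add_neg]
  refine (hna _ _).trans ?_
  rw [v.map_neg, v.map_one, hx, max_self]

variable {v} (hna : IsNonarchimedean v) (ψ : G →* R) (hψ : ∀ g, v (ψ g) = 1)

def congruenceSubgroup (c : ℝ) (hc : 0 ≤ c) : Subgroup G where
  carrier := {g | v (ψ g - 1) ≤ c}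
  one_mem' := by simpa using hc
  mul_mem' {g h} hg hh := by
    have e : ψ (g * h) - 1 = ψ g * (ψ h - 1) + (ψ g - 1) := by rw [map_mul]; noncomm_ring
    simp only [Set.mem_ofPred_eq, e]
    refine (hna _ _).trans (max_le ?_ hg)
    rwa [v.map_mul, hψ, one_mul]
  inv_mem' {g} hg := by
    have e : ψ g⁻¹ - 1 = -ψ g⁻¹ * (ψ g - 1) := by
      rw [neg_mul, mul_sub, ← map_mul, inv_mul_cancel, map_one, mul_one, neg_sub]
    simpa only [Set.mem_ofPred_eq, e, v.map_mul, v.map_neg, hψ, one_mul] using hg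

theorem congruenceSubgroup_normal (c : ℝ) (hc : 0 ≤ c) :
    (congruenceSubgroup hna ψ hψ c hc).Normal where
  conj_mem g hg h := by
    have e : ψ (h * g * h⁻¹) - 1 = ψ h * (ψ g - 1) * ψ h⁻¹ := by
      rw [mul_sub, mul_one, sub_mul, ← map_mul, ← map_mul, ← map_mul, mul_inv_cancel, map_one]
    show v (ψ (h * g * h⁻¹) - 1) ≤ c
    rwa [e, v.map_mul, v.map_mul, hψ, hψ, one_mul, mul_one]

theorem isOpen_congruenceSubgroup [TopologicalSpace G] [IsTopologicalGroup G]
    [TopologicalSpace R] [ContinuousSub R] (hψc : Continuous ψ) (hv : UpperSemicontinuous v)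
    (c : ℝ) (hc : 0 < c) :
    IsOpen (congruenceSubgroup hna ψ hψ c hc.le : Set G) := by
  have hball : IsOpen {g | v (ψ g - 1) < c} :=
    upperSemicontinuous_iff_isOpen_preimage.1 (hv.comp (hψc.sub continuous_const)) c
  refine Subgroup.isOpen_of_mem_nhds (congruenceSubgroup hna ψ hψ c hc.le) (g := 1)
    (Filter.mem_of_superset (hball.mem_nhds ?_) fun g (hg : v (ψ g - 1) < c) => hg.le)
  simpa using hc

end AbsoluteValue

/-- Let `G` be a pro-`p` group, `(Q, w)` a division ring with a discrete non-archimedean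
multiplicative valuation, and `φ : F_p[[G]] → Q` a continuous injective ring homomorphism
(continuity with respect to the `w`-topology on `Q`).  Then `w (φ g) = 1` for every `g ∈ G`,
and for each `i ≥ 0` the set `G_i = {g : w (φ (g - 1)) ≤ p^(-i)}` is an open normal subgroup
of `G`; the `G_i` form a descending chain with trivial intersection and `G_0 = G`. -/
theorem valuation_chain_of_embedding (p : ℕ) [Fact p.Prime] (G : Type) [Group G]
    [TopologicalSpace G] [IsTopologicalGroup G] (hG : IsProPGroup p G)
    (Q : Type) [DivisionRing Q] (w : Q → ℝ) (hw : IsDiscreteValuation p w)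
    (φ : CompletedGroupAlgebra p G →+* Q) (hinj : Function.Injective φ)
    (hcont : ∀ r : ℝ, 0 < r → IsOpen {x : CompletedGroupAlgebra p G | w (φ x) < r}) :
    (∀ g : G, w (φ (ofG p G g)) = 1) ∧
    (∀ i : ℕ, ∃ H : Subgroup G, H.Normal ∧ IsOpen (H : Set G) ∧
      (H : Set G) = {g : G | w (φ (ofG p G g - 1)) ≤ (p : ℝ) ^ (-(i : ℤ))}) ∧
    (∀ i : ℕ, {g : G | w (φ (ofG p G g - 1)) ≤ (p : ℝ) ^ (-(i + 1 : ℤ))} ⊆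
      {g : G | w (φ (ofG p G g - 1)) ≤ (p : ℝ) ^ (-(i : ℤ))}) ∧
    (⋂ i : ℕ, {g : G | w (φ (ofG p G g - 1)) ≤ (p : ℝ) ^ (-(i : ℤ))}) = {1} ∧
    {g : G | w (φ (ofG p G g - 1)) ≤ (p : ℝ) ^ (-(0 : ℤ))} = Set.univ := by
  obtain ⟨_, _, _, -⟩ := hG
  have hp : (1 : ℝ) < p := by exact_mod_cast (Fact.out : p.Prime).one_lt
  let v := hw.toAbsoluteValue.comp hinj
  have := φ.domain_nontrivial
  have hna : IsNonarchimedean v := fun a b =>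
    (congrArg w (map_add φ a b)).trans_le (hw.2.2.2.1 _ _)
  have husc : UpperSemicontinuous v := v.upperSemicontinuous_of_isOpen_lt hcont
  have hψ := continuous_ofG p G
  have hunit : ∀ g, v (ofG p G g) = 1 := v.apply_eq_one_of_compactSpace _ hψ husc
  refine ⟨hunit, fun i => ⟨_,
    AbsoluteValue.congruenceSubgroup_normal hna _ hunit _ (by positivity),
    AbsoluteValue.isOpen_congruenceSubgroup hna _ hunit hψ husc _ (by positivity), rfl⟩,
    fun i g hg => hg.trans (zpow_le_zpow_right₀ hp.le (by omega)), ?_, ?_⟩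
  · refine Set.eq_singleton_iff_unique_mem.2 ⟨Set.mem_iInter.2 fun i =>
      (AbsoluteValue.congruenceSubgroup hna _ hunit _ (by positivity)).one_mem, fun g hg => ?_⟩
    have hg₀ := eq_zero_of_forall_le_zpow_neg (v.nonneg _) hp (Set.mem_iInter.1 hg)
    exact ofG_injective p G (sub_eq_zero.1 (v.eq_zero.1 hg₀))
  · refine Set.eq_univ_of_forall fun g => ?_
    show v (ofG p G g - 1) ≤ (p : ℝ) ^ (-(0 : ℤ))
    rw [neg_zero, zpow_zero]
    exact v.apply_sub_one_le_one hna (hunit g)
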